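/- Let A be a closed densely defined operator from H1 to H2 and B = A† its Moore–Penrose inverse. Then A(I + A*A)^{-1} = B*(I + BB*)^{-1} as bounded operators from H1 to H2. -/

import Mathlib

open scoped InnerProductSpace

variable {H1 H2 : Type*}
  [NormedAddCommGroup H1] [InnerProductSpace ℂ H1] [CompleteSpace H1]
  [NormedAddCommGroup H2] [InnerProductSpace ℂ H2] [CompleteSpace H2]

/-- `B` is the Moore–Penrose inverse of the closed densely defined operator `A : H1 →ₗ. H2`. -/
def IsMPInverseP (A : H1 →ₗ.[ℂ] H2) (B : H2 →ₗ.[ℂ] H1) : Prop :=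
  B.IsClosed ∧
    B.domain = LinearMap.range A.toFun ⊔
      (LinearMap.ker A.adjoint.toFun).map A.adjoint.domain.subtype ∧
    (LinearMap.ker B.toFun).map B.domain.subtype =
      (LinearMap.ker A.adjoint.toFun).map A.adjoint.domain.subtype ∧
    (∀ x : A.domain, ∃ h : A x ∈ B.domain, ∃ h2 : B ⟨A x, h⟩ ∈ A.domain,
      A ⟨B ⟨A x, h⟩, h2⟩ = A x) ∧
    (∀ y : B.domain, ∃ h2 : B y ∈ A.domain, ∃ h : A ⟨B y, h2⟩ ∈ B.domain,
      B ⟨A ⟨B y, h2⟩, h⟩ = B y) ∧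
    (∀ (y : B.domain) (h2 : B y ∈ A.domain),
      A ⟨B y, h2⟩ ∈ (LinearMap.range A.toFun).topologicalClosure ∧
      ∀ z ∈ (LinearMap.range A.toFun).topologicalClosure, ⟪(y : H2) - A ⟨B y, h2⟩, z⟫_ℂ = 0) ∧
    (∀ (x : A.domain) (h : A x ∈ B.domain),
      B ⟨A x, h⟩ ∈ (LinearMap.range B.toFun).topologicalClosure ∧
      ∀ z ∈ (LinearMap.range B.toFun).topologicalClosure, ⟪(x : H1) - B ⟨A x, h⟩, z⟫_ℂ = 0)

/-!
Put `u = (I + A*A)⁻¹ x` and `v = x - BAu`. Since `u - BAu ⊥ R(B)` and, for `z ∈ D(B)`,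
`⟪A*Au, Bz⟫ = ⟪Au, ABz⟫ = ⟪Au, z⟫` (because `z - ABz ⊥ cl R(A) ∋ Au`), the vector
`v = (u - BAu) + A*Au` lies in `D(B*)` with `B*v = Au`. Hence `v + BB*v = v + BAu = x`, and as
`I + BB*` is injective (`⟪w, w + BB*w⟫ = ‖w‖² + ‖B*w‖²`), `v = (I + BB*)⁻¹ x`, so
`B*(I + BB*)⁻¹ x = Au = A(I + A*A)⁻¹ x`.
-/

open scoped LinearPMap

namespace LinearPMap

section

variable {𝕜 E F : Type*} [RCLike 𝕜]
  [NormedAddCommGroup E] [InnerProductSpace 𝕜 E] [CompleteSpace E]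
  [NormedAddCommGroup F] [InnerProductSpace 𝕜 F]
  {T : E →ₗ.[𝕜] F}

theorem exists_adjoint_apply_eq (hT : Dense (T.domain : Set E)) {y : F} {x₀ : E}
    (h : ∀ x : T.domain, ⟪x₀, x⟫_𝕜 = ⟪y, T x⟫_𝕜) :
    ∃ hy : y ∈ T†.domain, T† ⟨y, hy⟩ = x₀ :=
  ⟨mem_adjoint_domain_of_exists y ⟨x₀, h⟩, adjoint_apply_eq hT _ h⟩

theorem eq_zero_of_add_apply_adjoint_apply_eq_zero (hT : Dense (T.domain : Set E))
    {v : T†.domain} (hv : T† v ∈ T.domain) (h : (v : F) + T ⟨T† v, hv⟩ = 0) : v = 0 := by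
  have hnorm : ‖(v : F)‖ ^ 2 + ‖T† v‖ ^ 2 = 0 := by
    have := congrArg (fun y => RCLike.re ⟪(v : F), y⟫_𝕜) h
    simpa only [inner_add_right, ← adjoint_isFormalAdjoint hT v ⟨_, hv⟩, RCLike.re.map_add,
      inner_self_eq_norm_sq, inner_zero_right, RCLike.re.map_zero] using this
  have hv0 : ‖(v : F)‖ = 0 := by nlinarith [sq_nonneg ‖(v : F)‖, sq_nonneg ‖T† v‖]
  exact Submodule.coe_eq_zero.mp (norm_eq_zero.mp hv0)

theorem eq_of_add_apply_adjoint_apply_eq (hT : Dense (T.domain : Set E)) {v w : T†.domain}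
    (hv : T† v ∈ T.domain) (hw : T† w ∈ T.domain)
    (h : (v : F) + T ⟨T† v, hv⟩ = w + T ⟨T† w, hw⟩) : v = w := by
  have hvw : T† (v - w) ∈ T.domain := by
    rw [map_sub]
    exact sub_mem hv hw
  rw [← sub_eq_zero]
  refine eq_zero_of_add_apply_adjoint_apply_eq_zero hT hvw ?_
  have hsplit : (⟨T† (v - w), hvw⟩ : T.domain) = ⟨T† v, hv⟩ - ⟨T† w, hw⟩ :=
    Subtype.ext (map_sub _ _ _)
  rw [hsplit, map_sub, Submodule.coe_sub, sub_add_sub_comm, h, sub_self]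

variable [CompleteSpace F]

theorem dense_range_sup_ker_adjoint (hT : Dense (T.domain : Set E)) :
    Dense ((LinearMap.range T.toFun ⊔ (LinearMap.ker T†.toFun).map T†.domain.subtype :
      Submodule 𝕜 F) : Set F) := by
  rw [Submodule.dense_iff_topologicalClosure_eq_top, Submodule.topologicalClosure_eq_top_iff,
    Submodule.eq_bot_iff]
  intro w hw
  have hrange : ∀ x : T.domain, ⟪(0 : E), x⟫_𝕜 = ⟪w, T x⟫_𝕜 := fun x => by
    rw [inner_zero_left, eq_comm, inner_eq_zero_symm]
    exact (Submodule.mem_orthogonal _ _).mp hw _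
      (Submodule.mem_sup_left (LinearMap.mem_range_self _ x))
  obtain ⟨hwT, hw0⟩ := exists_adjoint_apply_eq hT hrange
  have hker : w ∈ (LinearMap.ker T†.toFun).map T†.domain.subtype :=
    Submodule.mem_map.mpr ⟨⟨w, hwT⟩, LinearMap.mem_ker.mpr hw0, rfl⟩
  exact inner_self_eq_zero.mp ((Submodule.mem_orthogonal _ _).mp hw w
    (Submodule.mem_sup_right hker))

end

end LinearPMap

namespace IsMPInverseP

variable {A : H1 →ₗ.[ℂ] H2} {B : H2 →ₗ.[ℂ] H1}

omit [CompleteSpace H2]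

theorem apply_mem_domain (hB : IsMPInverseP A B) (u : A.domain) : A u ∈ B.domain :=
  hB.2.1 ▸ Submodule.mem_sup_left (LinearMap.mem_range_self _ u)

theorem dense_domain [CompleteSpace H2] (hAd : Dense (A.domain : Set H1))
    (hB : IsMPInverseP A B) : Dense (B.domain : Set H2) :=
  hB.2.1 ▸ LinearPMap.dense_range_sup_ker_adjoint hAd

theorem inner_adjoint_apply_apply (hAd : Dense (A.domain : Set H1)) (hB : IsMPInverseP A B)
    (y : A†.domain) (hy : (y : H2) ∈ (LinearMap.range A.toFun).topologicalClosure)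
    (z : B.domain) : ⟪A† y, B z⟫_ℂ = ⟪(y : H2), z⟫_ℂ := by
  obtain ⟨-, -, -, -, hBAB, hABproj, -⟩ := hB
  obtain ⟨hz, -, -⟩ := hBAB z
  have hproj : ⟪(y : H2), (z : H2) - A ⟨B z, hz⟩⟫_ℂ = 0 :=
    inner_eq_zero_symm.mp ((hABproj z hz).2 _ hy)
  rw [inner_sub_right, sub_eq_zero] at hproj
  rw [LinearPMap.adjoint_isFormalAdjoint hAd y ⟨B z, hz⟩, hproj]

theorem inner_sub_inv_apply_apply_eq_zero (hB : IsMPInverseP A B) (u : A.domain)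
    (z : B.domain) : ⟪(u : H1) - B ⟨A u, hB.apply_mem_domain u⟩, B z⟫_ℂ = 0 := by
  obtain ⟨-, -, -, -, -, -, hBAproj⟩ := hB
  exact (hBAproj u _).2 _ (Submodule.le_topologicalClosure _ (LinearMap.mem_range_self _ z))

theorem inner_apply_eq_inner_sub_inv_apply (hAd : Dense (A.domain : Set H1))
    (hB : IsMPInverseP A B) (u : A.domain) (hAu : A u ∈ A†.domain) {x : H1}
    (hx : (u : H1) + A† ⟨A u, hAu⟩ = x) (z : B.domain) :
    ⟪A u, (z : H2)⟫_ℂ = ⟪x - B ⟨A u, hB.apply_mem_domain u⟩, B z⟫_ℂ := by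
  have hAA := hB.inner_adjoint_apply_apply hAd ⟨A u, hAu⟩
    (Submodule.le_topologicalClosure _ (LinearMap.mem_range_self _ u)) z
  rw [← hx, add_sub_right_comm, inner_add_left, hB.inner_sub_inv_apply_apply_eq_zero, zero_add,
    hAA]

end IsMPInverseP

theorem mp_resolvent_eq_general (A : H1 →ₗ.[ℂ] H2) (hAd : Dense (A.domain : Set H1))
    (B : H2 →ₗ.[ℂ] H1) (hB : IsMPInverseP A B)
    (R1 : H1 →L[ℂ] H1)
    (hR1 : ∀ x : H1, ∃ hx : R1 x ∈ A.domain, ∃ hy : A ⟨R1 x, hx⟩ ∈ A.adjoint.domain,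
      R1 x + A.adjoint ⟨A ⟨R1 x, hx⟩, hy⟩ = x)
    (R2 : H1 →L[ℂ] H1)
    (hR2 : ∀ x : H1, ∃ hx : R2 x ∈ B.adjoint.domain, ∃ hy : B.adjoint ⟨R2 x, hx⟩ ∈ B.domain,
      R2 x + B ⟨B.adjoint ⟨R2 x, hx⟩, hy⟩ = x) :
    ∀ x : H1, ∃ (h1 : R1 x ∈ A.domain) (h2 : R2 x ∈ B.adjoint.domain),
      A ⟨R1 x, h1⟩ = B.adjoint ⟨R2 x, h2⟩ := by
  have hBd := hB.dense_domain hAd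
  intro x
  obtain ⟨hu, hAu, hx⟩ := hR1 x
  obtain ⟨hw, hBw, hxw⟩ := hR2 x
  have hAuB := hB.apply_mem_domain ⟨R1 x, hu⟩
  obtain ⟨hv, hBv⟩ := LinearPMap.exists_adjoint_apply_eq hBd
    (hB.inner_apply_eq_inner_sub_inv_apply hAd ⟨R1 x, hu⟩ hAu hx)
  have hBvB : B† ⟨_, hv⟩ ∈ B.domain := by rwa [hBv]
  have hBvB_eq : (⟨B† ⟨_, hv⟩, hBvB⟩ : B.domain) = ⟨A ⟨R1 x, hu⟩, hAuB⟩ := Subtype.ext hBv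
  have hwv : (⟨R2 x, hw⟩ : B†.domain) = ⟨_, hv⟩ :=
    LinearPMap.eq_of_add_apply_adjoint_apply_eq hBd hBw hBvB
      (by rw [hBvB_eq, sub_add_cancel]; exact hxw)
  exact ⟨hu, hw, by rw [hwv, hBv]⟩

/-- For a closed densely defined `A` with Moore–Penrose inverse `B`,
`A(I + A*A)⁻¹ = B*(I + BB*)⁻¹` as bounded operators from `H1` to `H2`.  Here `R1` is the
bounded everywhere defined operator `(I + A*A)⁻¹` and `R2` is `(I + BB*)⁻¹`. -/
theorem mp_resolvent_eq (A : H1 →ₗ.[ℂ] H2) (hA : A.IsClosed) (hAd : Dense (A.domain : Set H1))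
    (B : H2 →ₗ.[ℂ] H1) (hB : IsMPInverseP A B)
    (R1 : H1 →L[ℂ] H1)
    (hR1 : ∀ x : H1, ∃ hx : R1 x ∈ A.domain, ∃ hy : A ⟨R1 x, hx⟩ ∈ A.adjoint.domain,
      R1 x + A.adjoint ⟨A ⟨R1 x, hx⟩, hy⟩ = x)
    (R2 : H1 →L[ℂ] H1)
    (hR2 : ∀ x : H1, ∃ hx : R2 x ∈ B.adjoint.domain, ∃ hy : B.adjoint ⟨R2 x, hx⟩ ∈ B.domain,
      R2 x + B ⟨B.adjoint ⟨R2 x, hx⟩, hy⟩ = x) :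
    ∀ x : H1, ∃ (h1 : R1 x ∈ A.domain) (h2 : R2 x ∈ B.adjoint.domain),
      A ⟨R1 x, h1⟩ = B.adjoint ⟨R2 x, h2⟩ :=
  mp_resolvent_eq_general A hAd B hB R1 hR1 R2 hR2
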